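/- arXiv:1910.11053 — 2 statements merged into one kernel-verified Lean document; each statement's English description precedes it below -/
import Mathlib

section
/- Let Σ = (A,B,C,D; X,U,Y) be a passive system and Σ₁ = (A₁,B₁,C₁,D₁; X₁,U,Y) an isometric system (T₁*∘T₁ = I) on complex Hilbert spaces, realizing the same transfer function, i.e. D = D₁ and C∘Aⁿ∘B = C₁∘A₁ⁿ∘B₁ for all n ≥ 0. Then for every n ≥ 0 and all u₀,…,uₙ ∈ U: ‖∑_{k=0}^{n} Aᵏ(B uₖ)‖ ≤ ‖∑_{k=0}^{n} A₁ᵏ(B₁ uₖ)‖. -/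
/-!
Feed the inputs `uₙ, …, u₀` to both systems, starting from the zero state. The final states are
the two sums of the statement. Since the systems have the same feedthrough operator and the same
moments `C Aᵐ B`, they produce the same outputs along the way. For the passive system the squared
norm of the final state plus the output energy is at most the input energy, for the isometric
system it is equal to it; comparing the two gives `‖x‖² ≤ ‖x₁‖²`.
-/

noncomputable section

open ContinuousLinearMap

variable {X X₁ U Y : Type*}
  [NormedAddCommGroup X] [InnerProductSpace ℂ X] [CompleteSpace X]
  [NormedAddCommGroup X₁] [InnerProductSpace ℂ X₁] [CompleteSpace X₁]
  [NormedAddCommGroup U] [InnerProductSpace ℂ U] [CompleteSpace U]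
  [NormedAddCommGroup Y] [InnerProductSpace ℂ Y] [CompleteSpace Y]

/-- The system operator `T(x,u) = (Ax + Bu, Cx + Du)` as a block operator between the
Hilbert space direct sums. -/
def sysOp {W : Type*} [NormedAddCommGroup W] [InnerProductSpace ℂ W] [CompleteSpace W]
    (A : W →L[ℂ] W) (B : U →L[ℂ] W) (C : W →L[ℂ] Y) (D : U →L[ℂ] Y) :
    WithLp 2 (W × U) →L[ℂ] WithLp 2 (W × Y) :=
  (((WithLp.prodContinuousLinearEquiv 2 ℂ W Y).symm : (W × Y) →L[ℂ] WithLp 2 (W × Y)).comp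
      ((A.comp (fst ℂ W U) + B.comp (snd ℂ W U)).prod
        (C.comp (fst ℂ W U) + D.comp (snd ℂ W U)))).comp
    ((WithLp.prodContinuousLinearEquiv 2 ℂ W U : WithLp 2 (W × U) →L[ℂ] (W × U)))

section Trajectory

variable {R S S₁ I O : Type*} [Semiring R]
  [TopologicalSpace S] [AddCommMonoid S] [Module R S]
  [TopologicalSpace S₁] [AddCommMonoid S₁] [Module R S₁]
  [TopologicalSpace I] [AddCommMonoid I] [Module R I]
  [TopologicalSpace O] [AddCommMonoid O] [Module R O]

/-- Lists of inputs are read latest input first. -/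
def reachedState (A : S →L[R] S) (B : I →L[R] S) : List I → S
  | [] => 0
  | v :: vs => A (reachedState A B vs) + B v

def outputs (A : S →L[R] S) (B : I →L[R] S) (C : S →L[R] O) (D : I →L[R] O) :
    List I → List O
  | [] => []
  | v :: vs => (C (reachedState A B vs) + D v) :: outputs A B C D vs

theorem reachedState_ofFn (A : S →L[R] S) (B : I →L[R] S) {m : ℕ} (u : Fin m → I) :
    reachedState A B (List.ofFn u) = ∑ k : Fin m, (A ^ (k : ℕ)) (B (u k)) := by
  induction m with
  | zero => rfl
  | succ m ih =>
    simp only [List.ofFn_succ, reachedState, ih, Fin.sum_univ_succ, map_sum, Fin.val_succ,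
      Fin.val_zero, pow_zero, pow_succ', mul_apply_eq_comp, one_apply_eq_self, add_comm]

variable {A : S →L[R] S} {B : I →L[R] S} {C : S →L[R] O} {D : I →L[R] O}
  {A₁ : S₁ →L[R] S₁} {B₁ : I →L[R] S₁} {C₁ : S₁ →L[R] O} {D₁ : I →L[R] O}

theorem apply_pow_reachedState_eq
    (hmom : ∀ n : ℕ, C.comp ((A ^ n).comp B) = C₁.comp ((A₁ ^ n).comp B₁))
    (l : List I) (m : ℕ) :
    C ((A ^ m) (reachedState A B l)) = C₁ ((A₁ ^ m) (reachedState A₁ B₁ l)) := by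
  induction l generalizing m with
  | nil => simp [reachedState]
  | cons v vs ih =>
    have hstep :
        C ((A ^ m) (A (reachedState A B vs))) = C₁ ((A₁ ^ m) (A₁ (reachedState A₁ B₁ vs))) := by
      simpa only [pow_succ, mul_apply_eq_comp] using ih (m + 1)
    simp only [reachedState, map_add, hstep]
    exact congr_arg _ congr($(hmom m) v)

theorem outputs_eq_of_moments_eq (hD : D = D₁)
    (hmom : ∀ n : ℕ, C.comp ((A ^ n).comp B) = C₁.comp ((A₁ ^ n).comp B₁)) (l : List I) :
    outputs A B C D l = outputs A₁ B₁ C₁ D₁ l := by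
  subst hD
  induction l with
  | nil => rfl
  | cons v vs ih =>
    simp only [outputs, ih]
    congr 2
    simpa using apply_pow_reachedState_eq hmom vs 0

end Trajectory

def energy {E : Type*} [Norm E] (l : List E) : ℝ :=
  (l.map fun e => ‖e‖ ^ 2).sum

@[simp]
theorem energy_nil {E : Type*} [Norm E] : energy ([] : List E) = 0 := rfl

@[simp]
theorem energy_cons {E : Type*} [Norm E] (e : E) (l : List E) :
    energy (e :: l) = ‖e‖ ^ 2 + energy l := rfl

section Energy

variable {W I O : Type*} [NormedAddCommGroup W] [InnerProductSpace ℂ W] [CompleteSpace W]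
  [NormedAddCommGroup I] [InnerProductSpace ℂ I] [NormedAddCommGroup O] [InnerProductSpace ℂ O]
  {A : W →L[ℂ] W} {B : I →L[ℂ] W} {C : W →L[ℂ] O} {D : I →L[ℂ] O}

theorem norm_sq_toLp_prod {E F : Type*} [NormedAddCommGroup E] [NormedAddCommGroup F]
    (x : E) (y : F) : ‖WithLp.toLp 2 (x, y)‖ ^ 2 = ‖x‖ ^ 2 + ‖y‖ ^ 2 :=
  WithLp.prod_norm_sq_eq_of_L2 _

theorem norm_sq_sysOp_apply (x : W) (v : I) :
    ‖sysOp A B C D (WithLp.toLp 2 (x, v))‖ ^ 2 = ‖A x + B v‖ ^ 2 + ‖C x + D v‖ ^ 2 := by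
  simp [sysOp, norm_sq_toLp_prod]

theorem energy_step_le (hpass : ‖sysOp A B C D‖ ≤ 1) (x : W) (v : I) :
    ‖A x + B v‖ ^ 2 + ‖C x + D v‖ ^ 2 ≤ ‖x‖ ^ 2 + ‖v‖ ^ 2 := by
  rw [← norm_sq_sysOp_apply, ← norm_sq_toLp_prod]
  gcongr
  simpa using (sysOp A B C D).le_of_opNorm_le hpass (WithLp.toLp 2 (x, v))

theorem energy_step_eq [CompleteSpace I] [CompleteSpace O]
    (hiso : adjoint (sysOp A B C D) ∘L sysOp A B C D = 1) (x : W) (v : I) :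
    ‖A x + B v‖ ^ 2 + ‖C x + D v‖ ^ 2 = ‖x‖ ^ 2 + ‖v‖ ^ 2 := by
  rw [← norm_sq_sysOp_apply, ← norm_sq_toLp_prod,
    (norm_map_iff_adjoint_comp_self _).mpr hiso]

theorem norm_sq_reachedState_add_energy_outputs_le (hpass : ‖sysOp A B C D‖ ≤ 1)
    (l : List I) :
    ‖reachedState A B l‖ ^ 2 + energy (outputs A B C D l) ≤ energy l := by
  induction l with
  | nil => simp [reachedState, outputs]
  | cons v vs ih =>
    simp only [reachedState, outputs, energy_cons]
    linarith [energy_step_le hpass (reachedState A B vs) v]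

theorem norm_sq_reachedState_add_energy_outputs_eq [CompleteSpace I] [CompleteSpace O]
    (hiso : adjoint (sysOp A B C D) ∘L sysOp A B C D = 1) (l : List I) :
    ‖reachedState A B l‖ ^ 2 + energy (outputs A B C D l) = energy l := by
  induction l with
  | nil => simp [reachedState, outputs]
  | cons v vs ih =>
    simp only [reachedState, outputs, energy_cons]
    linarith [energy_step_eq hiso (reachedState A B vs) v]

end Energy

theorem statement8 (A : X →L[ℂ] X) (B : U →L[ℂ] X) (C : X →L[ℂ] Y) (D : U →L[ℂ] Y)
    (A₁ : X₁ →L[ℂ] X₁) (B₁ : U →L[ℂ] X₁) (C₁ : X₁ →L[ℂ] Y) (D₁ : U →L[ℂ] Y)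
    (hpass : ‖sysOp A B C D‖ ≤ 1)
    (hiso : (ContinuousLinearMap.adjoint (sysOp A₁ B₁ C₁ D₁)).comp (sysOp A₁ B₁ C₁ D₁)
      = ContinuousLinearMap.id ℂ (WithLp 2 (X₁ × U)))
    (hD : D = D₁)
    (hmom : ∀ n : ℕ, C.comp ((A ^ n).comp B) = C₁.comp ((A₁ ^ n).comp B₁))
    (n : ℕ) (u : Fin (n + 1) → U) :
    ‖∑ k : Fin (n + 1), (A ^ (k : ℕ)) (B (u k))‖
      ≤ ‖∑ k : Fin (n + 1), (A₁ ^ (k : ℕ)) (B₁ (u k))‖ := by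
  have hle := norm_sq_reachedState_add_energy_outputs_le hpass (List.ofFn u)
  have heq := norm_sq_reachedState_add_energy_outputs_eq hiso (List.ofFn u)
  rw [outputs_eq_of_moments_eq hD hmom] at hle
  rw [← reachedState_ofFn, ← reachedState_ofFn]
  exact (pow_le_pow_iff_left₀ (norm_nonneg _) (norm_nonneg _) two_ne_zero).mp (by linarith)

end
end

section
/- Let Σ = (A,B,C,D; X,U,Y) be a passive system and Σ₁ = (A₁,B₁,C₁,D₁; X₁,U,Y) a co-isometric system (T₁∘T₁* = I) on complex Hilbert spaces, realizing the same transfer function, i.e. D = D₁ and C∘Aⁿ∘B = C₁∘A₁ⁿ∘B₁ for all n ≥ 0. Then for every n ≥ 0 and all y₀,…,yₙ ∈ Y: ‖∑_{k=0}^{n} (A*)ᵏ(C* yₖ)‖ ≤ ‖∑_{k=0}^{n} (A₁*)ᵏ(C₁* yₖ)‖. -/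
/-!
STATEMENT 9: If Σ = (A,B,C,D;X,U,Y) is passive and Σ₁ = (A₁,B₁,C₁,D₁;X₁,U,Y) is
co-isometric (T₁∘T₁* = I), and they realize the same transfer function, then
‖∑ₖ (A*)ᵏ(C*yₖ)‖ ≤ ‖∑ₖ (A₁*)ᵏ(C₁*yₖ)‖ for all finite families yₖ in Y.
-/

noncomputable section

open ContinuousLinearMap

variable {X X₁ U Y : Type*}
  [NormedAddCommGroup X] [InnerProductSpace ℂ X] [CompleteSpace X]
  [NormedAddCommGroup X₁] [InnerProductSpace ℂ X₁] [CompleteSpace X₁]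
  [NormedAddCommGroup U] [InnerProductSpace ℂ U] [CompleteSpace U]
  [NormedAddCommGroup Y] [InnerProductSpace ℂ Y] [CompleteSpace Y]

/-!
Pass to the adjoint systems: `Σ* = (A*, C*, B*, D*)` is again passive, `Σ₁*` is isometric, and
the two still have the same feedthrough and the same moments `B* (A*)ⁿ C* = (C Aⁿ B)*`. Driving
both from the zero state with the reversed input `yₙ, …, y₀`, the final states are the two sums
in the statement and the output sequences coincide. Energy balance,
`‖final state‖² + ‖outputs‖² ≤ ‖inputs‖²` with equality for the isometric system, then compares
the final states.
-/

section Trajectory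

variable {R W V Z : Type*} [Semiring R]
  [AddCommMonoid W] [TopologicalSpace W] [Module R W]
  [AddCommMonoid V] [TopologicalSpace V] [Module R V]
  [AddCommMonoid Z] [TopologicalSpace Z] [Module R Z]

def trajectory (A : W →L[R] W) (B : V →L[R] W) (v : ℕ → V) : ℕ → W
  | 0 => 0
  | j + 1 => A (trajectory A B v j) + B (v j)

theorem trajectory_eq_sum (A : W →L[R] W) (B : V →L[R] W) (v : ℕ → V) (m : ℕ) :
    trajectory A B v m = ∑ i ∈ Finset.range m, (A ^ i) (B (v (m - 1 - i))) := by
  induction m with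
  | zero => rfl
  | succ m ih =>
    rw [Finset.sum_range_succ', trajectory, ih, map_sum]
    congr 1
    refine Finset.sum_congr rfl fun i _ => ?_
    rw [pow_succ', mul_apply_eq_comp, show m + 1 - 1 - (i + 1) = m - 1 - i by omega]

theorem trajectory_rev_eq_sum (A : W →L[R] W) (B : V →L[R] W) (n : ℕ) (y : Fin (n + 1) → V) :
    trajectory A B (fun j => y ⟨n - j, by omega⟩) (n + 1)
      = ∑ k : Fin (n + 1), (A ^ (k : ℕ)) (B (y k)) := by
  rw [trajectory_eq_sum, ← Fin.sum_univ_eq_sum_range]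
  refine Finset.sum_congr rfl fun k _ => ?_
  congr 3
  ext
  simp only
  omega

theorem apply_trajectory_eq_of_moments {W₁ : Type*}
    [AddCommMonoid W₁] [TopologicalSpace W₁] [Module R W₁]
    {A : W →L[R] W} {B : V →L[R] W} {C : W →L[R] Z}
    {A₁ : W₁ →L[R] W₁} {B₁ : V →L[R] W₁} {C₁ : W₁ →L[R] Z}
    (hmom : ∀ n : ℕ, C.comp ((A ^ n).comp B) = C₁.comp ((A₁ ^ n).comp B₁)) (v : ℕ → V) (m : ℕ) :
    C (trajectory A B v m) = C₁ (trajectory A₁ B₁ v m) := by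
  simp only [trajectory_eq_sum, map_sum]
  exact Finset.sum_congr rfl fun i _ => DFunLike.congr_fun (hmom i) _

end Trajectory

section Energy

variable {W W₁ : Type*}
  [NormedAddCommGroup W] [InnerProductSpace ℂ W] [CompleteSpace W]
  [NormedAddCommGroup W₁] [InnerProductSpace ℂ W₁] [CompleteSpace W₁]

omit [CompleteSpace U] [CompleteSpace Y]

theorem sysOp_apply (A : W →L[ℂ] W) (B : U →L[ℂ] W) (C : W →L[ℂ] Y) (D : U →L[ℂ] Y)
    (p : WithLp 2 (W × U)) :
    sysOp A B C D p = WithLp.toLp 2 (A p.ofLp.1 + B p.ofLp.2, C p.ofLp.1 + D p.ofLp.2) := rfl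

theorem sq_norm_trajectory_add_sum_sq_norm_output (A : W →L[ℂ] W) (B : U →L[ℂ] W)
    (C : W →L[ℂ] Y) (D : U →L[ℂ] Y) (v : ℕ → U) (m : ℕ) :
    ‖trajectory A B v m‖ ^ 2 + ∑ j ∈ Finset.range m, ‖C (trajectory A B v j) + D (v j)‖ ^ 2
      = ∑ j ∈ Finset.range m, (‖v j‖ ^ 2 - (‖WithLp.toLp 2 (trajectory A B v j, v j)‖ ^ 2
          - ‖sysOp A B C D (WithLp.toLp 2 (trajectory A B v j, v j))‖ ^ 2)) := by
  induction m with
  | zero => simp [trajectory]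
  | succ m ih =>
    simp only [Finset.sum_range_succ, sysOp_apply, WithLp.prod_norm_sq_eq_of_L2, WithLp.toLp_fst,
      WithLp.toLp_snd, trajectory] at ih ⊢
    linarith

theorem sq_norm_trajectory_add_sum_le_of_norm_le_one {A : W →L[ℂ] W} {B : U →L[ℂ] W}
    {C : W →L[ℂ] Y} {D : U →L[ℂ] Y} (hT : ‖sysOp A B C D‖ ≤ 1) (v : ℕ → U) (m : ℕ) :
    ‖trajectory A B v m‖ ^ 2 + ∑ j ∈ Finset.range m, ‖C (trajectory A B v j) + D (v j)‖ ^ 2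
      ≤ ∑ j ∈ Finset.range m, ‖v j‖ ^ 2 := by
  rw [sq_norm_trajectory_add_sum_sq_norm_output]
  refine Finset.sum_le_sum fun j _ => ?_
  have hTp := ((sysOp A B C D).le_of_opNorm_le hT
    (WithLp.toLp 2 (trajectory A B v j, v j))).trans_eq (one_mul _)
  exact sub_le_self _ (sub_nonneg.mpr (pow_le_pow_left₀ (norm_nonneg _) hTp 2))

theorem sq_norm_trajectory_add_sum_eq_of_norm_map {A : W →L[ℂ] W} {B : U →L[ℂ] W}
    {C : W →L[ℂ] Y} {D : U →L[ℂ] Y} (hT : ∀ p, ‖sysOp A B C D p‖ = ‖p‖) (v : ℕ → U) (m : ℕ) :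
    ‖trajectory A B v m‖ ^ 2 + ∑ j ∈ Finset.range m, ‖C (trajectory A B v j) + D (v j)‖ ^ 2
      = ∑ j ∈ Finset.range m, ‖v j‖ ^ 2 := by
  simp only [sq_norm_trajectory_add_sum_sq_norm_output, hT, sub_self, sub_zero]

theorem norm_trajectory_le_of_norm_map {A : W →L[ℂ] W} {B : U →L[ℂ] W} {C : W →L[ℂ] Y}
    {D : U →L[ℂ] Y} {A₁ : W₁ →L[ℂ] W₁} {B₁ : U →L[ℂ] W₁} {C₁ : W₁ →L[ℂ] Y} {D₁ : U →L[ℂ] Y}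
    (hT : ‖sysOp A B C D‖ ≤ 1) (hT₁ : ∀ p, ‖sysOp A₁ B₁ C₁ D₁ p‖ = ‖p‖) (hD : D = D₁)
    (hmom : ∀ n : ℕ, C.comp ((A ^ n).comp B) = C₁.comp ((A₁ ^ n).comp B₁)) (v : ℕ → U) (m : ℕ) :
    ‖trajectory A B v m‖ ≤ ‖trajectory A₁ B₁ v m‖ := by
  have houtput : ∀ j, C (trajectory A B v j) + D (v j) = C₁ (trajectory A₁ B₁ v j) + D₁ (v j) :=
    fun j => by rw [apply_trajectory_eq_of_moments hmom, hD]
  have hle := sq_norm_trajectory_add_sum_le_of_norm_le_one hT v m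
  rw [← sq_norm_trajectory_add_sum_eq_of_norm_map hT₁ v m] at hle
  simp only [houtput, add_le_add_iff_right] at hle
  exact (pow_le_pow_iff_left₀ (norm_nonneg _) (norm_nonneg _) two_ne_zero).mp hle

end Energy

section Adjoint

variable {W : Type*} [NormedAddCommGroup W] [InnerProductSpace ℂ W] [CompleteSpace W]

theorem adjoint_sysOp (A : W →L[ℂ] W) (B : U →L[ℂ] W) (C : W →L[ℂ] Y) (D : U →L[ℂ] Y) :
    adjoint (sysOp A B C D) = sysOp (adjoint A) (adjoint C) (adjoint B) (adjoint D) := by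
  refine ((eq_adjoint_iff _ _).mpr fun p q => ?_).symm
  simp only [sysOp_apply, WithLp.prod_inner_apply, inner_add_left, inner_add_right,
    adjoint_inner_left]
  ring

theorem adjoint_comp_pow_comp (A : W →L[ℂ] W) (B : U →L[ℂ] W) (C : W →L[ℂ] Y) (n : ℕ) :
    adjoint (C.comp ((A ^ n).comp B)) = (adjoint B).comp ((adjoint A ^ n).comp (adjoint C)) := by
  rw [adjoint_comp, adjoint_comp, ← star_eq_adjoint A, ← star_pow, star_eq_adjoint, comp_assoc]

end Adjoint

theorem statement9 (A : X →L[ℂ] X) (B : U →L[ℂ] X) (C : X →L[ℂ] Y) (D : U →L[ℂ] Y)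
    (A₁ : X₁ →L[ℂ] X₁) (B₁ : U →L[ℂ] X₁) (C₁ : X₁ →L[ℂ] Y) (D₁ : U →L[ℂ] Y)
    (hpass : ‖sysOp A B C D‖ ≤ 1)
    (hcoiso : (sysOp A₁ B₁ C₁ D₁).comp (ContinuousLinearMap.adjoint (sysOp A₁ B₁ C₁ D₁))
      = ContinuousLinearMap.id ℂ (WithLp 2 (X₁ × Y)))
    (hD : D = D₁)
    (hmom : ∀ n : ℕ, C.comp ((A ^ n).comp B) = C₁.comp ((A₁ ^ n).comp B₁))
    (n : ℕ) (y : Fin (n + 1) → Y) :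
    ‖∑ k : Fin (n + 1), ((ContinuousLinearMap.adjoint A) ^ (k : ℕ))
        ((ContinuousLinearMap.adjoint C) (y k))‖
      ≤ ‖∑ k : Fin (n + 1), ((ContinuousLinearMap.adjoint A₁) ^ (k : ℕ))
        ((ContinuousLinearMap.adjoint C₁) (y k))‖ := by
  have hpass_adj : ‖sysOp (adjoint A) (adjoint C) (adjoint B) (adjoint D)‖ ≤ 1 := by
    rwa [← adjoint_sysOp, LinearIsometryEquiv.norm_map]
  have hiso_adj : ∀ p, ‖sysOp (adjoint A₁) (adjoint C₁) (adjoint B₁) (adjoint D₁) p‖ = ‖p‖ := by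
    rw [← adjoint_sysOp, norm_map_iff_adjoint_comp_self, adjoint_adjoint]
    exact hcoiso
  have hmom_adj : ∀ k : ℕ, (adjoint B).comp ((adjoint A ^ k).comp (adjoint C))
      = (adjoint B₁).comp ((adjoint A₁ ^ k).comp (adjoint C₁)) := fun k => by
    rw [← adjoint_comp_pow_comp, hmom, adjoint_comp_pow_comp]
  rw [← trajectory_rev_eq_sum, ← trajectory_rev_eq_sum]
  exact norm_trajectory_le_of_norm_map hpass_adj hiso_adj (congrArg adjoint hD) hmom_adj _ _

end
end
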